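/- Let R be a Noetherian ring, M a finitely generated R-module and N any R-module. Then CoSupp(M ⊗_R N) ⊆ Supp M ∩ CoSupp N. -/

import Mathlib

open CategoryTheory CategoryTheory.Limits IsLocalRing DirectSum

noncomputable section

/-- The inverse system `n ↦ M ⧸ aⁿM` with the natural projection maps. -/
def formalQuotDiagram (R : Type) [CommRing R] (a : Ideal R)
    (M : Type) [AddCommGroup M] [Module R M] : ℕᵒᵖ ⥤ ModuleCat R :=
  CategoryTheory.Functor.ofOpSequence
    (X := fun n => ModuleCat.of R (M ⧸ (a ^ n • ⊤ : Submodule R M)))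
    (fun n => ModuleCat.ofHom (Submodule.mapQ _ _ LinearMap.id (by
      simpa using Submodule.smul_mono (Ideal.pow_le_pow_right n.le_succ) le_rfl)))

/-- Formal local cohomology `𝔉ⁱ_a(M) = lim_n Hⁱ_m(M ⧸ aⁿM)`. -/
def formalLocalCohomology (R : Type) [CommRing R] [IsLocalRing R] (a : Ideal R) (i : ℕ)
    (M : Type) [AddCommGroup M] [Module R M] : ModuleCat R :=
  limit (formalQuotDiagram R a M ⋙ localCohomology (maximalIdeal R) i)

/-- Attached primes of a module: primes of the form `Ann(M/N)`. -/
def attachedPrimes (R : Type) [CommRing R] (M : Type) [AddCommGroup M] [Module R M] :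
    Set (Ideal R) :=
  {p | p.IsPrime ∧ ∃ N : Submodule R M, p = Module.annihilator R (M ⧸ N)}

/-- `E` is an injective hull (injective essential extension) of `N`. -/
def IsInjectiveHull (R : Type) [CommRing R] (N : Type) [AddCommGroup N] [Module R N]
    (E : Type) [AddCommGroup E] [Module R E] : Prop :=
  Module.Injective R E ∧ ∃ f : N →ₗ[R] E, Function.Injective f ∧
    ∀ S : Submodule R E, S ≠ ⊥ → S ⊓ LinearMap.range f ≠ ⊥

/-- The module `⊕_{m maximal} R/m`, whose injective hull is the minimal injective
cogenerator `E_R`. -/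
def cogenerator (R : Type) [CommRing R] : Type :=
  ⨁ m : MaximalSpectrum R, R ⧸ m.asIdeal

instance (R : Type) [CommRing R] : AddCommGroup (cogenerator R) := by
  unfold cogenerator; infer_instance

instance (R : Type) [CommRing R] : Module R (cogenerator R) := by
  unfold cogenerator; infer_instance

/-- Richardson's cosupport, via colocalization: `p ∈ CoSupp M` iff
`ᵖM = D_{R_p}((D_R M)_p) ≠ 0`, where `D` denotes duals into minimal injective
cogenerators (injective hulls of the direct sum of the residue fields). -/
def CoSupport (R : Type) [CommRing R] (M : Type) [AddCommGroup M] [Module R M] :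
    Set (PrimeSpectrum R) :=
  {p | ∀ (E : Type) [AddCommGroup E] [Module R E], IsInjectiveHull R (cogenerator R) E →
       ∀ (Ep : Type) [AddCommGroup Ep] [Module (Localization.AtPrime p.asIdeal) Ep],
         IsInjectiveHull (Localization.AtPrime p.asIdeal)
           (cogenerator (Localization.AtPrime p.asIdeal)) Ep →
       Nontrivial ((LocalizedModule p.asIdeal.primeCompl (M →ₗ[R] E))
          →ₗ[Localization.AtPrime p.asIdeal] Ep)}

/-- Coassociated primes over a local ring: `Coass M = Ass Hom_R(M, E(R/m))`. -/
def Coassociated (R : Type) [CommRing R] [IsLocalRing R]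
    (M : Type) [AddCommGroup M] [Module R M] : Set (PrimeSpectrum R) :=
  {p | ∀ (E : Type) [AddCommGroup E] [Module R E],
        IsInjectiveHull R (R ⧸ maximalIdeal R) E →
        p.asIdeal ∈ associatedPrimes R (M →ₗ[R] E)}

/-- The height of an ideal. -/
def idealHeight (R : Type) [CommRing R] (a : Ideal R) : ℕ∞ :=
  sInf {n | ∃ p : PrimeSpectrum R, a ≤ p.asIdeal ∧ Order.height p = n}

/-- The `a`-torsion submodule `H⁰_a(M) = ∪ₙ (0 :_M aⁿ)`. -/
def idealTorsion (R : Type) [CommRing R] (a : Ideal R)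
    (M : Type) [AddCommGroup M] [Module R M] : Submodule R M :=
  ⨆ n : ℕ, Submodule.torsionBySet R M ((a ^ n : Ideal R) : Set R)

/-- A Noetherian local ring is Gorenstein iff it has finite injective dimension
over itself, i.e. `Extⁱ(N, R) = 0` for all `i` larger than some bound and all `N`. -/
def IsGorensteinLocalRing (R : Type) [CommRing R] : Prop :=
  IsNoetherianRing R ∧ IsLocalRing R ∧
    ∃ n : ℕ, ∀ i : ℕ, n < i → ∀ N : ModuleCat R,
      Subsingleton (((Ext R (ModuleCat R) i).obj (Opposite.op N)).obj (ModuleCat.of R R))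

end

/-!
Over `R_p` write `ᵖX = Hom((Hom_R(X, E))_p, E_p)`. If `p ∉ Supp M`, some `s ∉ p` kills the
finite module `M`, hence `M ⊗ N` and `Hom(M ⊗ N, E)`, so the localization at `p` vanishes and
`ᵖ(M ⊗ N) = 0`; since `CoSupport` quantifies over all injective hulls, this needs a pair of hulls
to exist. A surjection `Rⁿ → M` gives a surjection `Nⁿ → M ⊗ N`, so `Hom(M ⊗ N, E)` embeds into
`Hom(N, E)ⁿ`. Localization preserves injections and `E_p` is injective, so `ᵖ(M ⊗ N)` is a
quotient of `ᵖ(Nⁿ) ≅ (ᵖN)ⁿ`, which vanishes when `ᵖN` does.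
-/

open TensorProduct

universe u v

theorem exists_maximal_disjoint {α : Type*} [CompleteLattice α] [IsCompactlyGenerated α]
    (a : α) : ∃ b, Maximal (Disjoint a) b := by
  obtain ⟨b, -, hb⟩ := zorn_le_nonempty₀ {b | Disjoint a b}
    (fun c hc hchain _ _ ↦ ⟨sSup c, hchain.directedOn.disjoint_sSup_right.2 hc,
      fun _ ↦ le_sSup⟩) ⊥ disjoint_bot_right
  exact ⟨b, hb⟩

namespace Submodule

variable {R : Type u} [Ring R] {J : Type v} [AddCommGroup J] [Module R J]

def IsEssentialIn (A B : Submodule R J) : Prop :=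
  A ≤ B ∧ ∀ x ∈ B, x ≠ 0 → ∃ r : R, r • x ∈ A ∧ r • x ≠ 0

theorem IsEssentialIn.refl (A : Submodule R J) : IsEssentialIn A A :=
  ⟨le_rfl, fun _ hx hx0 ↦ ⟨1, by simpa using hx, by simpa using hx0⟩⟩

theorem IsEssentialIn.trans {A B C : Submodule R J} (hAB : IsEssentialIn A B)
    (hBC : IsEssentialIn B C) : IsEssentialIn A C := by
  refine ⟨hAB.1.trans hBC.1, fun x hx hx0 ↦ ?_⟩
  obtain ⟨r, hrB, hr0⟩ := hBC.2 x hx hx0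
  obtain ⟨r', hr'A, hr'0⟩ := hAB.2 _ hrB hr0
  exact ⟨r' * r, by rwa [mul_smul], by rwa [mul_smul]⟩

theorem exists_maximal_isEssentialIn (A : Submodule R J) :
    ∃ S, Maximal (IsEssentialIn A) S := by
  obtain ⟨S, -, hS⟩ := zorn_le_nonempty₀ {B | IsEssentialIn A B} (fun c hc hchain B hB ↦ by
    refine ⟨sSup c, ⟨(hc hB).1.trans (le_sSup hB), fun x hx hx0 ↦ ?_⟩, fun _ ↦ le_sSup⟩
    obtain ⟨B', hB'c, hxB'⟩ := (mem_sSup_of_directed ⟨B, hB⟩ hchain.directedOn).mp hx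
    exact (hc hB'c).2 x hxB' hx0) A (IsEssentialIn.refl A)
  exact ⟨S, hS⟩

theorem isEssentialIn_map_mkQ_of_maximal_disjoint {S T : Submodule R J}
    (hT : Maximal (Disjoint S) T) : IsEssentialIn (S.map T.mkQ) ⊤ := by
  refine ⟨le_top, fun y _ hy ↦ ?_⟩
  obtain ⟨u, rfl⟩ := T.mkQ_surjective y
  have hu : u ∉ T := fun h ↦ hy ((Quotient.mk_eq_zero T).mpr h)
  have : ¬ Disjoint S (T ⊔ R ∙ u) := fun h ↦
    hu (hT.2 h le_sup_left (mem_sup_right (mem_span_singleton_self u)))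
  obtain ⟨s, hsS, hs, hs0⟩ : ∃ s ∈ S, s ∈ T ⊔ R ∙ u ∧ s ≠ 0 := by
    simpa [disjoint_def] using this
  obtain ⟨t, ht, v, hv, rfl⟩ := mem_sup.mp hs
  obtain ⟨r, rfl⟩ := mem_span_singleton.mp hv
  have hmk : T.mkQ (t + r • u) = r • T.mkQ u := by
    rw [map_add, map_smul, (by simpa using ht : T.mkQ t = 0), zero_add]
  refine ⟨r, hmk ▸ mem_map_of_mem hsS, fun h0 ↦ hs0 ?_⟩
  rw [← hmk, mkQ_apply, Quotient.mk_eq_zero] at h0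
  exact disjoint_def.mp hT.1 _ hsS h0

end Submodule

namespace Module.Injective

theorem of_leftInverse {R : Type u} [Ring R] {Q S : Type v} [AddCommGroup Q] [Module R Q]
    [Module.Injective R Q] [AddCommGroup S] [Module R S] (i : S →ₗ[R] Q) (r : Q →ₗ[R] S)
    (hri : Function.LeftInverse r i) : Module.Injective R S where
  out _ _ _ _ _ _ f hf g := by
    obtain ⟨h, hh⟩ := Module.Injective.out f hf (i ∘ₗ g)
    exact ⟨r ∘ₗ h, fun x ↦ by simp [hh, hri (g x)]⟩

open Submodule in
theorem of_maximal_isEssentialIn {R : Type u} [Ring R] {J : Type v} [AddCommGroup J]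
    [Module R J] [Module.Injective R J] {A S : Submodule R J}
    (hS : Maximal (IsEssentialIn A) S) : Module.Injective R S := by
  -- `g` extends the inverse of `S ≅ S.map T.mkQ`; maximality of `S` forces `range g ≤ S`,
  -- so `g ∘ T.mkQ` retracts `J` onto `S`.
  obtain ⟨T, hT⟩ := exists_maximal_disjoint S
  have hφ : Function.Injective (T.mkQ ∘ₗ S.subtype) := by
    rw [← LinearMap.ker_eq_bot, LinearMap.ker_comp, ker_mkQ, ← disjoint_iff_comap_eq_bot]
    exact hT.1
  obtain ⟨g, hg⟩ := Module.Injective.out _ hφ S.subtype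
  have hgS : ∀ s ∈ S, g (T.mkQ s) = s := fun s hs ↦ hg ⟨s, hs⟩
  have hS_range : IsEssentialIn S (LinearMap.range g) := by
    refine ⟨fun s hs ↦ ⟨_, hgS s hs⟩, ?_⟩
    rintro _ ⟨y, rfl⟩ hy
    have hy0 : y ≠ 0 := by rintro rfl; simp at hy
    obtain ⟨r, ⟨s, hs, hsy⟩, hr0⟩ :=
      (isEssentialIn_map_mkQ_of_maximal_disjoint hT).2 y trivial hy0
    refine ⟨r, ?_, ?_⟩ <;> rw [← map_smul, ← hsy, hgS s hs]
    · exact hs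
    · exact fun hs0 ↦ hr0 (by rw [← hsy, hs0, map_zero])
  have hrange_le : LinearMap.range g ≤ S := hS.2 (hS.1.trans hS_range) hS_range.1
  exact of_leftInverse S.subtype ((g ∘ₗ T.mkQ).codRestrict S fun _ ↦ hrange_le ⟨_, rfl⟩)
    fun s ↦ Subtype.ext (hgS s s.2)

theorem nontrivial_linearMap_of_injective {R : Type u} [Ring R] {X Y Q : Type v}
    [AddCommGroup X] [Module R X] [AddCommGroup Y] [Module R Y] [AddCommGroup Q] [Module R Q]
    [Module.Injective R Q] {f : X →ₗ[R] Y} (hf : Function.Injective f)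
    [Nontrivial (X →ₗ[R] Q)] : Nontrivial (Y →ₗ[R] Q) :=
  Function.Surjective.nontrivial (f := fun h : Y →ₗ[R] Q ↦ h ∘ₗ f) fun g ↦
    (Module.Injective.out f hf g).imp fun _ hh ↦ LinearMap.ext hh

end Module.Injective

theorem exists_injective_linearMap_to_injective (R : Type) [Ring R] (N : Type) [AddCommGroup N]
    [Module R N] :
    ∃ (J : Type) (_ : AddCommGroup J) (_ : Module R J) (_ : Module.Injective R J)
      (f : N →ₗ[R] J), Function.Injective f := by
  let ι := Injective.ι (ModuleCat.of R N)
  have : Injective (ModuleCat.of R ↥(Injective.under (ModuleCat.of R N))) :=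
    inferInstanceAs (Injective (Injective.under (ModuleCat.of R N)))
  exact ⟨_, _, _, Module.injective_module_of_injective_object R _, ι.hom,
    (ModuleCat.mono_iff_injective ι).mp inferInstance⟩

theorem exists_isInjectiveHull (R : Type) [CommRing R] (N : Type) [AddCommGroup N]
    [Module R N] :
    ∃ (E : Type) (_ : AddCommGroup E) (_ : Module R E), IsInjectiveHull R N E := by
  obtain ⟨J, _, _, _, f, hf⟩ := exists_injective_linearMap_to_injective R N
  obtain ⟨S, hS⟩ := Submodule.exists_maximal_isEssentialIn (LinearMap.range f)
  refine ⟨S, _, _, Module.Injective.of_maximal_isEssentialIn hS,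
    f.codRestrict S fun x ↦ hS.1.1 ⟨x, rfl⟩, fun x y h ↦ hf (congrArg Subtype.val h), ?_⟩
  intro U hU
  obtain ⟨x, hxU, hx0⟩ := (Submodule.ne_bot_iff U).mp hU
  obtain ⟨r, ⟨n, hn⟩, hr0⟩ := hS.1.2 x x.2 (by simpa using hx0)
  rw [Submodule.ne_bot_iff]
  exact ⟨r • x, ⟨U.smul_mem r hxU, n, Subtype.ext hn⟩,
    fun h ↦ hr0 (by simpa using congrArg Subtype.val h)⟩

namespace LocalizedModule

variable {R : Type u} [CommRing R] (S : Submonoid R) {A B Q : Type u} [AddCommGroup A]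
  [Module R A] [AddCommGroup B] [Module R B] [AddCommGroup Q] [Module (Localization S) Q]

theorem nontrivial_linearMap_of_injective [Module.Injective (Localization S) Q]
    {f : A →ₗ[R] B} (hf : Function.Injective f)
    [Nontrivial (LocalizedModule S A →ₗ[Localization S] Q)] :
    Nontrivial (LocalizedModule S B →ₗ[Localization S] Q) :=
  Module.Injective.nontrivial_linearMap_of_injective (map_injective S f hf)

theorem nontrivial_linearMap_of_finsupp {α : Type*}
    [Nontrivial (LocalizedModule S (α →₀ B) →ₗ[Localization S] Q)] :
    Nontrivial (LocalizedModule S B →ₗ[Localization S] Q) := by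
  let e : LocalizedModule S (α →₀ B) ≃ₗ[Localization S] (α →₀ LocalizedModule S B) :=
    IsLocalizedModule.mapEquiv S (mkLinearMap S _)
      (Finsupp.mapRange.linearMap (mkLinearMap S B)) _ (LinearEquiv.refl R _)
  refine not_subsingleton_iff_nontrivial.mp fun _ ↦ ?_
  obtain ⟨F, G, hFG⟩ := ‹Nontrivial (LocalizedModule S (α →₀ B) →ₗ[Localization S] Q)›
  have : F ∘ₗ e.symm.toLinearMap = G ∘ₗ e.symm.toLinearMap :=
    Finsupp.lhom_ext' fun _ ↦ Subsingleton.elim _ _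
  exact hFG (LinearMap.ext fun x ↦ by simpa using LinearMap.congr_fun this (e x))

end LocalizedModule

section CoSupport

variable {R : Type} [CommRing R]

theorem notMem_coSupport_of_smul_eq_zero {X : Type} [AddCommGroup X] [Module R X]
    {p : PrimeSpectrum R} {s : R} (hs : s ∉ p.asIdeal) (hX : ∀ x : X, s • x = 0) :
    p ∉ CoSupport R X := by
  obtain ⟨E, _, _, hE⟩ := exists_isInjectiveHull R (cogenerator R)
  obtain ⟨Ep, _, _, hEp⟩ := exists_isInjectiveHull (Localization.AtPrime p.asIdeal)
    (cogenerator (Localization.AtPrime p.asIdeal))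
  have : Subsingleton (LocalizedModule p.asIdeal.primeCompl (X →ₗ[R] E)) :=
    LocalizedModule.subsingleton_iff.mpr fun _ ↦
      ⟨s, hs, LinearMap.ext fun x ↦ by simp [← map_smul, hX]⟩
  exact fun hp ↦ not_nontrivial _ (hp E hE Ep hEp)

theorem coSupport_subset_of_surjective {X Y : Type} [AddCommGroup X] [Module R X]
    [AddCommGroup Y] [Module R Y] {f : Y →ₗ[R] X} (hf : Function.Surjective f) :
    CoSupport R X ⊆ CoSupport R Y := by
  intro p hp E _ _ hE Ep _ _ hEp
  have := hp E hE Ep hEp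
  have := hEp.1
  exact LocalizedModule.nontrivial_linearMap_of_injective p.asIdeal.primeCompl
    (f := LinearMap.lcomp R E f) fun _ _ h ↦ LinearMap.ext (hf.forall.2 (LinearMap.congr_fun h))

theorem coSupport_finsupp_subset {α : Type} [Finite α] (N : Type) [AddCommGroup N]
    [Module R N] : CoSupport R (α →₀ N) ⊆ CoSupport R N := by
  intro p hp E _ _ hE Ep _ _ hEp
  have := hp E hE Ep hEp
  have := hEp.1
  let e : ((α →₀ N) →ₗ[R] E) ≃ₗ[R] (α →₀ (N →ₗ[R] E)) :=
    (Finsupp.lsum R).symm ≪≫ₗ (Finsupp.linearEquivFunOnFinite R _ α).symm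
  have := LocalizedModule.nontrivial_linearMap_of_injective p.asIdeal.primeCompl (Q := Ep)
    e.injective
  exact LocalizedModule.nontrivial_linearMap_of_finsupp p.asIdeal.primeCompl (α := α)

variable {M N : Type} [AddCommGroup M] [Module R M] [Module.Finite R M] [AddCommGroup N]
  [Module R N]

theorem coSupport_tensorProduct_subset_right : CoSupport R (M ⊗[R] N) ⊆ CoSupport R N := by
  obtain ⟨n, s, hs⟩ := Module.Finite.exists_fin (R := R) (M := M)
  have hs_surj : Function.Surjective (Finsupp.linearCombination R s) := by
    rw [← LinearMap.range_eq_top, Finsupp.range_linearCombination, hs]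
  calc CoSupport R (M ⊗[R] N)
      ⊆ CoSupport R (Fin n →₀ N) := coSupport_subset_of_surjective
        (f := (Finsupp.linearCombination R s).rTensor N ∘ₗ
          (finsuppScalarLeft R N (Fin n)).symm.toLinearMap)
        ((LinearMap.rTensor_surjective N hs_surj).comp (LinearEquiv.surjective _))
    _ ⊆ CoSupport R N := coSupport_finsupp_subset N

theorem coSupport_tensorProduct_subset_support :
    CoSupport R (M ⊗[R] N) ⊆ Module.support R M := by
  intro p hp
  by_contra hpM
  obtain ⟨s, hsM, hsp⟩ :=
    SetLike.not_le_iff_exists.mp (Module.mem_support_iff_of_finite.not.mp hpM)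
  refine notMem_coSupport_of_smul_eq_zero hsp (fun x ↦ ?_) hp
  induction x using TensorProduct.induction_on with
  | zero => exact smul_zero s
  | tmul m n => rw [smul_tmul', Module.mem_annihilator.mp hsM, zero_tmul]
  | add x y hx hy => rw [smul_add, hx, hy, add_zero]

end CoSupport

theorem stmt7_general (R : Type) [CommRing R]
    (M : Type) [AddCommGroup M] [Module R M] [Module.Finite R M]
    (N : Type) [AddCommGroup N] [Module R N] :
    CoSupport R (TensorProduct R M N) ⊆ Module.support R M ∩ CoSupport R N :=
  Set.subset_inter coSupport_tensorProduct_subset_support coSupport_tensorProduct_subset_right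

/-- `CoSupp (M ⊗ N) ⊆ Supp M ∩ CoSupp N` for `M` finitely generated. -/
theorem stmt7 (R : Type) [CommRing R] [IsNoetherianRing R]
    (M : Type) [AddCommGroup M] [Module R M] [Module.Finite R M]
    (N : Type) [AddCommGroup N] [Module R N] :
    CoSupport R (TensorProduct R M N) ⊆ Module.support R M ∩ CoSupport R N :=
  stmt7_general R M N
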